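/- Let n ≥ 1 and let π ∈ Π_n be fixed. Then the number of π' ∈ Π_n that are disjoint from π (i.e., π'_{ij} ≠ π_{ij} for all i,j) equals Σ_{S ⊆ {1,…,n}×{1,…,n}} (−1)^{|S|} · ∏_{i=1}^{n} (n − r_i(S))! · ∏_{j=1}^{n} (n − c_j(S))!, where the sum ranges over all subsets S of {1,…,n}×{1,…,n}. -/
import Mathlib


/-- An `n²×n²` binary matrix, with rows indexed by `(block-row, offset)` and columns by
`(block-column, offset)`, is an S-permutation matrix if it is a permutation matrix
(exactly one `1` in every row and every column) and every `n×n` block contains exactly one `1`. -/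
def IsSPermMatrix (n : ℕ) (A : Matrix (Fin n × Fin n) (Fin n × Fin n) Bool) : Prop :=
  (∀ r, ∃! c, A r c = true) ∧
  (∀ c, ∃! r, A r c = true) ∧
  (∀ i j : Fin n, ∃! p : Fin n × Fin n, A (i, p.1) (j, p.2) = true)

/-- Two binary matrices are disjoint if there is no position where both have a `1`. -/
def MatDisjoint {α β : Type*} (A B : Matrix α β Bool) : Prop :=
  ∀ i j, ¬(A i j = true ∧ B i j = true)

/-- An `n²×n²` matrix with natural number entries is a Sudoku matrix if every row, every
column and every `n×n` block contains each of the numbers `1,…,n²` exactly once. -/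
def IsSudoku (n : ℕ) (P : Matrix (Fin n × Fin n) (Fin n × Fin n) ℕ) : Prop :=
  (∀ r, ∀ v ∈ Finset.Icc 1 (n * n), ∃! c, P r c = v) ∧
  (∀ c, ∀ v ∈ Finset.Icc 1 (n * n), ∃! r, P r c = v) ∧
  (∀ i j : Fin n, ∀ v ∈ Finset.Icc 1 (n * n), ∃! p : Fin n × Fin n, P (i, p.1) (j, p.2) = v)

/-- `π ∈ Π_n` iff in each row the first components form a permutation of `{1,…,n}` and in
each column the second components form a permutation of `{1,…,n}`. -/
def IsPiMatrix (n : ℕ) (π : Matrix (Fin n) (Fin n) (Fin n × Fin n)) : Prop :=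
  (∀ i, Function.Bijective fun j => (π i j).1) ∧
  (∀ j, Function.Bijective fun i => (π i j).2)

/-- Two elements of `Π_n` are disjoint if they differ in every entry. -/
def PiDisjoint {n : ℕ} (π π' : Matrix (Fin n) (Fin n) (Fin n × Fin n)) : Prop :=
  ∀ i j, π i j ≠ π' i j

/-- number of elements of `S` in row `i` -/
def rowCount {n : ℕ} (S : Finset (Fin n × Fin n)) (i : Fin n) : ℕ :=
  (S.filter fun p => p.1 = i).card

/-- number of elements of `S` in column `j` -/
def colCount {n : ℕ} (S : Finset (Fin n × Fin n)) (j : Fin n) : ℕ :=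
  (S.filter fun p => p.2 = j).card

section Aux

open Finset Equiv

abbrev PiPair (n : ℕ) := (Fin n → Equiv.Perm (Fin n)) × (Fin n → Equiv.Perm (Fin n))

def toMat {n : ℕ} (x : PiPair n) : Matrix (Fin n) (Fin n) (Fin n × Fin n) :=
  fun i j => (x.1 i j, x.2 j i)

lemma toMat_isPi {n : ℕ} (x : PiPair n) : IsPiMatrix n (toMat x) :=
  ⟨fun i => (x.1 i).bijective, fun j => (x.2 j).bijective⟩

noncomputable def piEquiv (n : ℕ) :
    PiPair n ≃ {m : Matrix (Fin n) (Fin n) (Fin n × Fin n) // IsPiMatrix n m} where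
  toFun x := ⟨toMat x, toMat_isPi x⟩
  invFun m := (fun i => Equiv.ofBijective _ (m.2.1 i), fun j => Equiv.ofBijective _ (m.2.2 j))
  left_inv x := by ext <;> rfl
  right_inv m := by
    apply Subtype.ext
    funext i j
    exact Prod.ext rfl rfl

lemma aux_card_perm_fixed {n : ℕ} (T : Finset (Fin n)) (υ : Equiv.Perm (Fin n)) :
    Nat.card {σ : Equiv.Perm (Fin n) // ∀ j ∈ T, σ j = υ j} = (n - T.card).factorial := by
  classical
  have e1 : {σ : Equiv.Perm (Fin n) // ∀ j ∈ T, σ j = υ j} ≃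
      {ρ : Equiv.Perm (Fin n) // ∀ j ∈ T, ρ j = j} :=
    { toFun := fun σ => ⟨υ⁻¹ * σ.1, fun j hj => by simp [σ.2 j hj]⟩
      invFun := fun ρ => ⟨υ * ρ.1, fun j hj => by simp [ρ.2 j hj]⟩
      left_inv := fun σ => by ext x; simp
      right_inv := fun ρ => by ext x; simp }
  have e2 : {ρ : Equiv.Perm (Fin n) // ∀ j ∈ T, ρ j = j} ≃
      {f : Equiv.Perm (Fin n) // ∀ a, ¬(a ∉ T) → f a = a} :=
    Equiv.subtypeEquivRight (fun ρ => by simp)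
  have e3 := (Equiv.Perm.subtypeEquivSubtypePerm (fun a => a ∉ T)).symm
  rw [Nat.card_congr ((e1.trans e2).trans e3), Nat.card_eq_fintype_card, Fintype.card_perm]
  congr 1
  rw [Fintype.card_subtype_compl]
  simp

lemma rowT_card {n : ℕ} (S : Finset (Fin n × Fin n)) (i : Fin n) :
    (Finset.univ.filter fun j => (i, j) ∈ S).card = rowCount S i := by
  classical
  rw [rowCount]
  have h : (S.filter fun p => p.1 = i) =
      (Finset.univ.filter fun j => (i, j) ∈ S).image (fun j => (i, j)) := by
    ext ⟨a, b⟩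
    simp only [Finset.mem_filter, Finset.mem_image, Finset.mem_univ, true_and]
    constructor
    · rintro ⟨hp, rfl⟩
      exact ⟨b, hp, rfl⟩
    · rintro ⟨j, hj, h⟩
      cases h
      exact ⟨hj, rfl⟩
  rw [h, Finset.card_image_of_injective _ (fun a b hab => by simpa using hab)]

lemma colT_card {n : ℕ} (S : Finset (Fin n × Fin n)) (j : Fin n) :
    (Finset.univ.filter fun i => (i, j) ∈ S).card = colCount S j := by
  classical
  rw [colCount]
  have h : (S.filter fun p => p.2 = j) =
      (Finset.univ.filter fun i => (i, j) ∈ S).image (fun i => (i, j)) := by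
    ext ⟨a, b⟩
    simp only [Finset.mem_filter, Finset.mem_image, Finset.mem_univ, true_and]
    constructor
    · rintro ⟨hp, rfl⟩
      exact ⟨a, hp, rfl⟩
    · rintro ⟨i, hi, h⟩
      cases h
      exact ⟨hi, rfl⟩
  rw [h, Finset.card_image_of_injective _ (fun a b hab => by simpa using hab)]

lemma cardN {n : ℕ} (π : Matrix (Fin n) (Fin n) (Fin n × Fin n)) (hπ : IsPiMatrix n π)
    (S : Finset (Fin n × Fin n)) :
    Nat.card {x : PiPair n // ∀ p ∈ S, toMat x p.1 p.2 = π p.1 p.2} =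
      (∏ i : Fin n, (n - rowCount S i).factorial) *
      (∏ j : Fin n, (n - colCount S j).factorial) := by
  classical
  have e0 : {x : PiPair n // ∀ p ∈ S, toMat x p.1 p.2 = π p.1 p.2} ≃
      {x : PiPair n // (∀ i, ∀ j, (i, j) ∈ S → x.1 i j = (π i j).1) ∧
        (∀ j, ∀ i, (i, j) ∈ S → x.2 j i = (π i j).2)} := by
    apply Equiv.subtypeEquivRight
    intro x
    constructor
    · intro h
      exact ⟨fun i j hij => congrArg Prod.fst (h (i, j) hij),
             fun j i hij => congrArg Prod.snd (h (i, j) hij)⟩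
    · rintro ⟨h1, h2⟩ ⟨i, j⟩ hp
      exact Prod.ext (h1 i j hp) (h2 j i hp)
  rw [Nat.card_congr (e0.trans (Equiv.subtypeProdEquivProd
    (p := fun f : Fin n → Equiv.Perm (Fin n) => ∀ i j, (i, j) ∈ S → f i j = (π i j).1)
    (q := fun g : Fin n → Equiv.Perm (Fin n) => ∀ j i, (i, j) ∈ S → g j i = (π i j).2))),
    Nat.card_prod]
  congr 1
  · rw [Nat.card_congr (Equiv.subtypePiEquivPi
      (p := fun i (σ : Equiv.Perm (Fin n)) => ∀ j, (i, j) ∈ S → σ j = (π i j).1)), Nat.card_pi]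
    refine Finset.prod_congr rfl fun i _ => ?_
    have e1 : {σ : Equiv.Perm (Fin n) // ∀ j, (i, j) ∈ S → σ j = (π i j).1} ≃
        {σ : Equiv.Perm (Fin n) // ∀ j ∈ (Finset.univ.filter fun j => (i, j) ∈ S),
          σ j = (Equiv.ofBijective _ (hπ.1 i)) j} :=
      Equiv.subtypeEquivRight (fun σ => by simp [Equiv.ofBijective])
    rw [Nat.card_congr e1, aux_card_perm_fixed, rowT_card]
  · rw [Nat.card_congr (Equiv.subtypePiEquivPi
      (p := fun j (σ : Equiv.Perm (Fin n)) => ∀ i, (i, j) ∈ S → σ i = (π i j).2)), Nat.card_pi]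
    refine Finset.prod_congr rfl fun j _ => ?_
    have e1 : {σ : Equiv.Perm (Fin n) // ∀ i, (i, j) ∈ S → σ i = (π i j).2} ≃
        {σ : Equiv.Perm (Fin n) // ∀ i ∈ (Finset.univ.filter fun i => (i, j) ∈ S),
          σ i = (Equiv.ofBijective _ (hπ.2 j)) i} :=
      Equiv.subtypeEquivRight (fun σ => by simp [Equiv.ofBijective])
    rw [Nat.card_congr e1, aux_card_perm_fixed, colT_card]

end Aux

theorem card_disjoint_from_fixed_pi (n : ℕ) (hn : 1 ≤ n)
    (π : Matrix (Fin n) (Fin n) (Fin n × Fin n)) (hπ : IsPiMatrix n π) :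
    (Nat.card {π' : {x : Matrix (Fin n) (Fin n) (Fin n × Fin n) // IsPiMatrix n x} //
        PiDisjoint π'.val π} : ℤ) =
      ∑ S : Finset (Fin n × Fin n), (-1 : ℤ) ^ S.card *
        ((∏ i : Fin n, (n - rowCount S i).factorial) *
         (∏ j : Fin n, (n - colCount S j).factorial) : ℕ) := by
  classical
  -- transfer to PiPair
  have eD : {x : PiPair n // ∀ p : Fin n × Fin n, toMat x p.1 p.2 ≠ π p.1 p.2} ≃
      {π' : {x : Matrix (Fin n) (Fin n) (Fin n × Fin n) // IsPiMatrix n x} //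
        PiDisjoint π'.val π} :=
    (piEquiv n).subtypeEquiv (fun x => by
      constructor
      · intro h i j
        exact h (i, j)
      · intro h p
        exact h p.1 p.2)
  rw [← Nat.card_congr eD]
  -- rewrite RHS using cardN
  have hR : ∀ S : Finset (Fin n × Fin n),
      ((∏ i : Fin n, (n - rowCount S i).factorial) *
       (∏ j : Fin n, (n - colCount S j).factorial) : ℕ) =
      Nat.card {x : PiPair n // ∀ p ∈ S, toMat x p.1 p.2 = π p.1 p.2} :=
    fun S => (cardN π hπ S).symm
  simp_rw [hR]
  -- convert Nat.cards to filter cards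
  have hc1 : Nat.card {x : PiPair n // ∀ p : Fin n × Fin n, toMat x p.1 p.2 ≠ π p.1 p.2} =
      (Finset.univ.filter fun x : PiPair n =>
        ∀ p : Fin n × Fin n, toMat x p.1 p.2 ≠ π p.1 p.2).card := by
    rw [Nat.card_eq_fintype_card, Fintype.card_subtype]
  have hc2 : ∀ S : Finset (Fin n × Fin n),
      Nat.card {x : PiPair n // ∀ p ∈ S, toMat x p.1 p.2 = π p.1 p.2} =
      (Finset.univ.filter fun x : PiPair n => ∀ p ∈ S, toMat x p.1 p.2 = π p.1 p.2).card := by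
    intro S
    rw [Nat.card_eq_fintype_card, Fintype.card_subtype]
  rw [hc1]
  simp_rw [hc2, Finset.card_filter]
  push_cast
  simp_rw [Finset.mul_sum]
  rw [Finset.sum_comm]
  have key : ∀ x : PiPair n,
      (∑ S : Finset (Fin n × Fin n),
        (-1 : ℤ) ^ S.card * (if ∀ p ∈ S, toMat x p.1 p.2 = π p.1 p.2 then (1 : ℤ) else 0)) =
      (if ∀ p : Fin n × Fin n, toMat x p.1 p.2 ≠ π p.1 p.2 then (1 : ℤ) else 0) := by
    intro x
    set B : Finset (Fin n × Fin n) :=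
      Finset.univ.filter (fun p => toMat x p.1 p.2 = π p.1 p.2) with hB
    have h1 : ∀ S : Finset (Fin n × Fin n),
        (∀ p ∈ S, toMat x p.1 p.2 = π p.1 p.2) ↔ S ⊆ B := by
      intro S
      simp [hB, Finset.subset_iff]
    simp_rw [mul_ite, mul_one, mul_zero, h1]
    rw [← Finset.sum_filter]
    have h2 : Finset.univ.filter (fun S : Finset (Fin n × Fin n) => S ⊆ B) = B.powerset := by
      ext S
      simp
    rw [h2, Finset.sum_powerset_neg_one_pow_card]
    have h3 : (B = ∅) ↔ (∀ p : Fin n × Fin n, toMat x p.1 p.2 ≠ π p.1 p.2) := by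
      simp [hB, Finset.filter_eq_empty_iff]
    rw [if_congr h3 rfl rfl]
  simp_rw [key]
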